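/- The alternating group 𝔄₅ (of order 60) admits an unmixed ramification structure of type ((2,5,5), (3,3,3,3)), an unmixed ramification structure of type ((5,5,5), (2,2,2,3)), and an unmixed ramification structure of type ((3,3,5), (2,2,2,2,2)). -/
import Mathlib


/-- A spherical system of generators of a group `G`: a tuple generating `G`
whose product equals `1`. -/
def SphericalSystem {G : Type*} [Group G] {r : ℕ} (T : Fin r → G) : Prop :=
  Subgroup.closure (Set.range T) = ⊤ ∧ (List.ofFn T).prod = 1

/-- `Σ(T)`: the union of all conjugates of the cyclic subgroups generated
by the entries of `T`. -/
def SigmaSet {G : Type*} [Group G] {r : ℕ} (T : Fin r → G) : Set G :=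
  ⋃ (g : G) (i : Fin r) (j : ℕ), {g * T i ^ j * g⁻¹}

/-- The tuple `T` has type `A` : the orders of its entries are, up to a
permutation, the entries of `A`. -/
def HasType {G : Type*} [Group G] {r : ℕ} (T : Fin r → G) (A : Fin r → ℕ) : Prop :=
  ∃ σ : Equiv.Perm (Fin r), ∀ i, orderOf (T i) = A (σ i)

/-- An unmixed ramification structure of type `(A, B)` on `G`: a disjoint pair
of spherical systems of generators of types `A` and `B`. -/
def UnmixedRamificationStructure {G : Type*} [Group G] {r s : ℕ}
    (T₁ : Fin r → G) (T₂ : Fin s → G) (A : Fin r → ℕ) (B : Fin s → ℕ) : Prop :=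
  SphericalSystem T₁ ∧ SphericalSystem T₂ ∧ HasType T₁ A ∧ HasType T₂ B ∧
    SigmaSet T₁ ∩ SigmaSet T₂ = {1}

namespace Stmt19Aux

open Equiv Subgroup

set_option maxRecDepth 100000

instance : Fact (Nat.Prime 5) := ⟨by norm_num⟩

abbrev A5 := alternatingGroup (Fin 5)

def mkA (p : Equiv.Perm (Fin 5)) (h : Equiv.Perm.sign p = 1) : A5 :=
  ⟨p, Equiv.Perm.mem_alternatingGroup.2 h⟩

def a1 : A5 := mkA ([(1:Fin 5),2].formPerm * [(3:Fin 5),4].formPerm) (by decide)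
def a2 : A5 := mkA ([(0:Fin 5),1,3,2,4].formPerm) (by decide)
def a3 : A5 := mkA ([(0:Fin 5),4,1,3,2].formPerm) (by decide)
def b1 : A5 := mkA ([(2:Fin 5),3,4].formPerm) (by decide)
def b2 : A5 := mkA ([(2:Fin 5),4,3].formPerm) (by decide)
def b3 : A5 := mkA ([(0:Fin 5),1,2].formPerm) (by decide)
def b4 : A5 := mkA ([(0:Fin 5),2,1].formPerm) (by decide)
def c1 : A5 := mkA ([(0:Fin 5),1,2,3,4].formPerm) (by decide)
def c2 : A5 := mkA ([(0:Fin 5),1,3,4,2].formPerm) (by decide)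
def c3 : A5 := mkA ([(0:Fin 5),3,4,1,2].formPerm) (by decide)
def d1 : A5 := mkA ([(1:Fin 5),2].formPerm * [(3:Fin 5),4].formPerm) (by decide)
def d2 : A5 := mkA ([(1:Fin 5),3].formPerm * [(2:Fin 5),4].formPerm) (by decide)
def d3 : A5 := mkA ([(0:Fin 5),1].formPerm * [(2:Fin 5),3].formPerm) (by decide)
def d4 : A5 := mkA ([(0:Fin 5),1,4].formPerm) (by decide)
def e1 : A5 := mkA ([(2:Fin 5),3,4].formPerm) (by decide)
def e2 : A5 := mkA ([(0:Fin 5),1,2].formPerm) (by decide)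
def e3 : A5 := mkA ([(0:Fin 5),2,4,3,1].formPerm) (by decide)
def f1 : A5 := mkA ([(1:Fin 5),2].formPerm * [(3:Fin 5),4].formPerm) (by decide)
def f2 : A5 := mkA ([(1:Fin 5),2].formPerm * [(3:Fin 5),4].formPerm) (by decide)
def f3 : A5 := mkA ([(0:Fin 5),1].formPerm * [(3:Fin 5),4].formPerm) (by decide)
def f4 : A5 := mkA ([(0:Fin 5),3].formPerm * [(1:Fin 5),4].formPerm) (by decide)
def f5 : A5 := mkA ([(0:Fin 5),4].formPerm * [(1:Fin 5),3].formPerm) (by decide)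

lemma normal_of_index_two {G : Type*} [Group G] (H : Subgroup G) (h : H.index = 2) :
    H.Normal := by
  constructor
  intro n hn g
  rw [Subgroup.mul_mem_iff_of_index_two h, Subgroup.mul_mem_iff_of_index_two h,
    H.inv_mem_iff]
  tauto

lemma card_A5 : Nat.card A5 = 60 := by
  have h : 2 * Fintype.card A5 = Fintype.card (Perm (Fin 5)) := two_mul_card_alternatingGroup
  rw [Fintype.card_perm, Fintype.card_fin] at h
  have h120 : Nat.factorial 5 = 120 := rfl
  rw [h120] at h
  rw [Nat.card_eq_fintype_card]
  omega

lemma eq_top_of_235 (H : Subgroup A5) (x y z : A5) (hx : x ∈ H) (hy : y ∈ H) (hz : z ∈ H)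
    (h2 : orderOf x = 2) (h3 : orderOf y = 3) (h5 : orderOf z = 5) : H = ⊤ := by
  have d2 : 2 ∣ Nat.card H := by have := H.orderOf_dvd_natCard hx; rwa [h2] at this
  have d3 : 3 ∣ Nat.card H := by have := H.orderOf_dvd_natCard hy; rwa [h3] at this
  have d5 : 5 ∣ Nat.card H := by have := H.orderOf_dvd_natCard hz; rwa [h5] at this
  have hmul := H.card_mul_index
  rw [card_A5] at hmul
  have hdvd : Nat.card H ∣ 60 := ⟨H.index, hmul.symm⟩
  have hle : Nat.card H ≤ 60 := Nat.le_of_dvd (by norm_num) hdvd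
  have hpos : 0 < Nat.card H := Nat.card_pos
  have hcases : Nat.card H = 30 ∨ Nat.card H = 60 := by
    set n := Nat.card H with hn
    clear_value n
    interval_cases n <;> omega
  rcases hcases with h | h
  · exfalso
    have hidx : H.index = 2 := by rw [h] at hmul; omega
    have hnorm := normal_of_index_two H hidx
    rcases IsSimpleGroup.eq_bot_or_eq_top_of_normal H hnorm with rfl | rfl
    · rw [Subgroup.card_bot] at h; omega
    · rw [Subgroup.index_top] at hidx; omega
  · exact H.eq_top_of_card_eq (by rw [h, card_A5])

lemma one_mem_sigma {G : Type*} [Group G] {r : ℕ} [NeZero r] (T : Fin r → G) :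
    (1 : G) ∈ SigmaSet T := by
  have i : Fin r := ⟨0, Nat.pos_of_ne_zero (NeZero.ne r)⟩
  exact Set.mem_iUnion.2 ⟨1, Set.mem_iUnion.2 ⟨i, Set.mem_iUnion.2 ⟨0, by simp⟩⟩⟩

lemma orderOf_conj' {G : Type*} [Group G] (g x : G) :
    orderOf (g * x * g⁻¹) = orderOf x :=
  orderOf_injective (MulAut.conj g).toMonoidHom (MulEquiv.injective _) x

lemma sigma_disjoint {G : Type*} [Group G] {r s : ℕ} [NeZero r] [NeZero s]
    (T₁ : Fin r → G) (T₂ : Fin s → G)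
    (h : ∀ i j, Nat.Coprime (orderOf (T₁ i)) (orderOf (T₂ j))) :
    SigmaSet T₁ ∩ SigmaSet T₂ = {1} := by
  ext x
  constructor
  · rintro ⟨hx1, hx2⟩
    simp only [SigmaSet, Set.mem_iUnion, Set.mem_singleton_iff] at hx1 hx2
    obtain ⟨g, i, m, rfl⟩ := hx1
    obtain ⟨g', j, n, he⟩ := hx2
    have h1 : orderOf (g * T₁ i ^ m * g⁻¹) ∣ orderOf (T₁ i) := by
      rw [orderOf_conj']; exact orderOf_pow_dvd m
    have h2 : orderOf (g * T₁ i ^ m * g⁻¹) ∣ orderOf (T₂ j) := by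
      rw [he, orderOf_conj']; exact orderOf_pow_dvd n
    have hone : orderOf (g * T₁ i ^ m * g⁻¹) ∣ 1 := (h i j) ▸ Nat.dvd_gcd h1 h2
    rw [Set.mem_singleton_iff, ← orderOf_eq_one_iff]
    exact Nat.dvd_one.mp hone
  · intro hx
    rw [Set.mem_singleton_iff] at hx
    subst hx
    exact ⟨one_mem_sigma _, one_mem_sigma _⟩

lemma build {r s : ℕ} [NeZero r] [NeZero s] (T₁ : Fin r → A5) (T₂ : Fin s → A5)
    (A : Fin r → ℕ) (B : Fin s → ℕ)
    (hc1 : Subgroup.closure (Set.range T₁) = ⊤) (hc2 : Subgroup.closure (Set.range T₂) = ⊤)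
    (hp1 : (List.ofFn T₁).prod = 1) (hp2 : (List.ofFn T₂).prod = 1)
    (hA : ∀ i, orderOf (T₁ i) = A i) (hB : ∀ j, orderOf (T₂ j) = B j)
    (hcop : ∀ i j, Nat.Coprime (A i) (B j)) :
    UnmixedRamificationStructure T₁ T₂ A B :=
  ⟨⟨hc1, hp1⟩, ⟨hc2, hp2⟩, ⟨Equiv.refl _, fun i => hA i⟩, ⟨Equiv.refl _, fun j => hB j⟩,
   sigma_disjoint T₁ T₂ fun i j => by rw [hA i, hB j]; exact hcop i j⟩

-- orders of the chosen elements
lemma ord_a1 : orderOf a1 = 2 := orderOf_eq_prime (by decide) (by decide)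
lemma ord_a2 : orderOf a2 = 5 := orderOf_eq_prime (by decide) (by decide)
lemma ord_a3 : orderOf a3 = 5 := orderOf_eq_prime (by decide) (by decide)
lemma ord_b1 : orderOf b1 = 3 := orderOf_eq_prime (by decide) (by decide)
lemma ord_b2 : orderOf b2 = 3 := orderOf_eq_prime (by decide) (by decide)
lemma ord_b3 : orderOf b3 = 3 := orderOf_eq_prime (by decide) (by decide)
lemma ord_b4 : orderOf b4 = 3 := orderOf_eq_prime (by decide) (by decide)
lemma ord_c1 : orderOf c1 = 5 := orderOf_eq_prime (by decide) (by decide)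
lemma ord_c2 : orderOf c2 = 5 := orderOf_eq_prime (by decide) (by decide)
lemma ord_c3 : orderOf c3 = 5 := orderOf_eq_prime (by decide) (by decide)
lemma ord_d1 : orderOf d1 = 2 := orderOf_eq_prime (by decide) (by decide)
lemma ord_d2 : orderOf d2 = 2 := orderOf_eq_prime (by decide) (by decide)
lemma ord_d3 : orderOf d3 = 2 := orderOf_eq_prime (by decide) (by decide)
lemma ord_d4 : orderOf d4 = 3 := orderOf_eq_prime (by decide) (by decide)
lemma ord_e1 : orderOf e1 = 3 := orderOf_eq_prime (by decide) (by decide)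
lemma ord_e2 : orderOf e2 = 3 := orderOf_eq_prime (by decide) (by decide)
lemma ord_e3 : orderOf e3 = 5 := orderOf_eq_prime (by decide) (by decide)
lemma ord_f1 : orderOf f1 = 2 := orderOf_eq_prime (by decide) (by decide)
lemma ord_f2 : orderOf f2 = 2 := orderOf_eq_prime (by decide) (by decide)
lemma ord_f3 : orderOf f3 = 2 := orderOf_eq_prime (by decide) (by decide)
lemma ord_f4 : orderOf f4 = 2 := orderOf_eq_prime (by decide) (by decide)
lemma ord_f5 : orderOf f5 = 2 := orderOf_eq_prime (by decide) (by decide)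

-- orders of auxiliary words
lemma ord_wa : orderOf (a1 * a2 * a2) = 3 := orderOf_eq_prime (by decide) (by decide)
lemma ord_wb2 : orderOf (b1 * b3 * b1 * b4) = 2 := orderOf_eq_prime (by decide) (by decide)
lemma ord_wb5 : orderOf (b1 * b3) = 5 := orderOf_eq_prime (by decide) (by decide)
lemma ord_wc2 : orderOf (c1 * c1 * c1 * c2) = 2 := orderOf_eq_prime (by decide) (by decide)
lemma ord_wc3 : orderOf (c1 * c1 * c2) = 3 := orderOf_eq_prime (by decide) (by decide)
lemma ord_wd5 : orderOf (d1 * d3) = 5 := orderOf_eq_prime (by decide) (by decide)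
lemma ord_we2 : orderOf (e2 * e3 * e3 * e2) = 2 := orderOf_eq_prime (by decide) (by decide)
lemma ord_wf3 : orderOf (f2 * f3) = 3 := orderOf_eq_prime (by decide) (by decide)
lemma ord_wf5 : orderOf (f2 * f4) = 5 := orderOf_eq_prime (by decide) (by decide)

lemma mem_range_val {r : ℕ} (T : Fin r → A5) (i : Fin r) :
    T i ∈ Subgroup.closure (Set.range T) :=
  Subgroup.subset_closure (Set.mem_range_self i)

lemma hcA : Subgroup.closure (Set.range ![a1, a2, a3]) = ⊤ := by
  have m1 := mem_range_val ![a1, a2, a3] 0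
  have m2 := mem_range_val ![a1, a2, a3] 1
  exact eq_top_of_235 _ a1 (a1 * a2 * a2) a2 m1
    (Subgroup.mul_mem _ (Subgroup.mul_mem _ m1 m2) m2) m2 ord_a1 ord_wa ord_a2

lemma hcB : Subgroup.closure (Set.range ![b1, b2, b3, b4]) = ⊤ := by
  have m1 := mem_range_val ![b1, b2, b3, b4] 0
  have m3 := mem_range_val ![b1, b2, b3, b4] 2
  have m4 := mem_range_val ![b1, b2, b3, b4] 3
  exact eq_top_of_235 _ (b1 * b3 * b1 * b4) b1 (b1 * b3)
    (Subgroup.mul_mem _ (Subgroup.mul_mem _ (Subgroup.mul_mem _ m1 m3) m1) m4)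
    m1 (Subgroup.mul_mem _ m1 m3) ord_wb2 ord_b1 ord_wb5

lemma hcC : Subgroup.closure (Set.range ![c1, c2, c3]) = ⊤ := by
  have m1 := mem_range_val ![c1, c2, c3] 0
  have m2 := mem_range_val ![c1, c2, c3] 1
  exact eq_top_of_235 _ (c1 * c1 * c1 * c2) (c1 * c1 * c2) c1
    (Subgroup.mul_mem _ (Subgroup.mul_mem _ (Subgroup.mul_mem _ m1 m1) m1) m2)
    (Subgroup.mul_mem _ (Subgroup.mul_mem _ m1 m1) m2) m1 ord_wc2 ord_wc3 ord_c1

lemma hcD : Subgroup.closure (Set.range ![d1, d2, d3, d4]) = ⊤ := by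
  have m1 := mem_range_val ![d1, d2, d3, d4] 0
  have m3 := mem_range_val ![d1, d2, d3, d4] 2
  have m4 := mem_range_val ![d1, d2, d3, d4] 3
  exact eq_top_of_235 _ d1 d4 (d1 * d3) m1 m4 (Subgroup.mul_mem _ m1 m3)
    ord_d1 ord_d4 ord_wd5

lemma hcE : Subgroup.closure (Set.range ![e1, e2, e3]) = ⊤ := by
  have m2 := mem_range_val ![e1, e2, e3] 1
  have m3 := mem_range_val ![e1, e2, e3] 2
  exact eq_top_of_235 _ (e2 * e3 * e3 * e2) e2 e3
    (Subgroup.mul_mem _ (Subgroup.mul_mem _ (Subgroup.mul_mem _ m2 m3) m3) m2)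
    m2 m3 ord_we2 ord_e2 ord_e3

lemma hcF : Subgroup.closure (Set.range ![f1, f2, f3, f4, f5]) = ⊤ := by
  have m2 := mem_range_val ![f1, f2, f3, f4, f5] 1
  have m3 := mem_range_val ![f1, f2, f3, f4, f5] 2
  have m4 := mem_range_val ![f1, f2, f3, f4, f5] 3
  exact eq_top_of_235 _ f2 (f2 * f3) (f2 * f4) m2 (Subgroup.mul_mem _ m2 m3)
    (Subgroup.mul_mem _ m2 m4) ord_f2 ord_wf3 ord_wf5

end Stmt19Aux

open Stmt19Aux in
theorem stmt_19 :
    (∃ (T₁ : Fin 3 → alternatingGroup (Fin 5)) (T₂ : Fin 4 → alternatingGroup (Fin 5)),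
      UnmixedRamificationStructure T₁ T₂ ![2, 5, 5] ![3, 3, 3, 3]) ∧
    (∃ (T₁ : Fin 3 → alternatingGroup (Fin 5)) (T₂ : Fin 4 → alternatingGroup (Fin 5)),
      UnmixedRamificationStructure T₁ T₂ ![5, 5, 5] ![2, 2, 2, 3]) ∧
    (∃ (T₁ : Fin 3 → alternatingGroup (Fin 5)) (T₂ : Fin 5 → alternatingGroup (Fin 5)),
      UnmixedRamificationStructure T₁ T₂ ![3, 3, 5] ![2, 2, 2, 2, 2]) := by
  refine ⟨⟨![a1, a2, a3], ![b1, b2, b3, b4], ?_⟩,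
          ⟨![c1, c2, c3], ![d1, d2, d3, d4], ?_⟩,
          ⟨![e1, e2, e3], ![f1, f2, f3, f4, f5], ?_⟩⟩
  · refine build _ _ _ _ hcA hcB (by decide) (by decide) ?_ ?_ (by decide)
    · intro i; fin_cases i
      · exact ord_a1
      · exact ord_a2
      · exact ord_a3
    · intro j; fin_cases j
      · exact ord_b1
      · exact ord_b2
      · exact ord_b3
      · exact ord_b4
  · refine build _ _ _ _ hcC hcD (by decide) (by decide) ?_ ?_ (by decide)
    · intro i; fin_cases i
      · exact ord_c1
      · exact ord_c2
      · exact ord_c3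
    · intro j; fin_cases j
      · exact ord_d1
      · exact ord_d2
      · exact ord_d3
      · exact ord_d4
  · refine build _ _ _ _ hcE hcF (by decide) (by decide) ?_ ?_ (by decide)
    · intro i; fin_cases i
      · exact ord_e1
      · exact ord_e2
      · exact ord_e3
    · intro j; fin_cases j
      · exact ord_f1
      · exact ord_f2
      · exact ord_f3
      · exact ord_f4
      · exact ord_f5
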